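/- Let * be a continuous t-norm and T an algebra of truth values for *. Then Taut([0,1],min) ⊆ Taut(T,*) (i.e. the induced logic extends Gödel logic) if and only if every element of T is idempotent, i.e. a*a = a for all a ∈ T; in that case * restricted to T is the minimum, a*b = min(a,b) for all a,b ∈ T, and →* restricted to T is the Gödel residuum: a →* b = 1 if a ≤ b and a →* b = b if a > b. -/

import Mathlib

open Set

noncomputable section

/-- The real unit interval `[0,1]` as a subset of `ℝ`. -/
def I01 : Set ℝ := Set.Icc 0 1

/-- A continuous t-norm on `[0,1]`. -/
structure ContTNorm where
  mul : ℝ → ℝ → ℝ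
  maps_to : ∀ x ∈ I01, ∀ y ∈ I01, mul x y ∈ I01
  continuousOn : ContinuousOn (fun p : ℝ × ℝ => mul p.1 p.2) (I01 ×ˢ I01)
  assoc : ∀ x ∈ I01, ∀ y ∈ I01, ∀ z ∈ I01, mul (mul x y) z = mul x (mul y z)
  comm : ∀ x ∈ I01, ∀ y ∈ I01, mul x y = mul y x
  mono : ∀ a ∈ I01, ∀ b ∈ I01, ∀ c ∈ I01, b ≤ c → mul a b ≤ mul a c
  one_mul' : ∀ x ∈ I01, mul 1 x = x

/-- The residuum of a t-norm: `x →* y := sup { c ∈ [0,1] | x * c ≤ y }`. -/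
def resid (t : ContTNorm) (x y : ℝ) : ℝ :=
  sSup {c | c ∈ I01 ∧ t.mul x c ≤ y}

/-- An algebra of truth values for the t-norm `t`: a subset of `[0,1]` containing
`0` and `1` and closed under `t.mul` and its residuum. -/
structure TruthAlg (t : ContTNorm) where
  carrier : Set ℝ
  subset : carrier ⊆ I01
  zero_mem : (0:ℝ) ∈ carrier
  one_mem : (1:ℝ) ∈ carrier
  mul_mem : ∀ x ∈ carrier, ∀ y ∈ carrier, t.mul x y ∈ carrier
  resid_mem : ∀ x ∈ carrier, ∀ y ∈ carrier, resid t x y ∈ carrier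

/-- Propositional formulas over countably many variables with `&`, `→`, `⊥`. -/
inductive Formula : Type
  | var : ℕ → Formula
  | bot : Formula
  | conj : Formula → Formula → Formula
  | impl : Formula → Formula → Formula

/-- `α ↔ β := (α → β) & (β → α)`. -/
def Formula.iff (a b : Formula) : Formula := .conj (.impl a b) (.impl b a)

/-- The valuation determined by an assignment `v` of reals to the variables. -/
def eval (t : ContTNorm) (v : ℕ → ℝ) : Formula → ℝ
  | .var i => v i
  | .bot => 0
  | .conj a b => t.mul (eval t v a) (eval t v b)
  | .impl a b => resid t (eval t v a) (eval t v b)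

/-- A valuation into `(T, t)` is (identified with) an assignment of values of `T`
to the propositional variables. -/
def IsValuation (t : ContTNorm) (T : TruthAlg t) (v : ℕ → ℝ) : Prop :=
  ∀ i, v i ∈ T.carrier

/-- The logic induced by `(T, t)`: all formulas true to degree 1 under every valuation. -/
def Taut (t : ContTNorm) (T : TruthAlg t) : Set Formula :=
  {α | ∀ v : ℕ → ℝ, IsValuation t T v → eval t v α = 1}

/-- Principle P1. -/
def P1 (L : Set Formula) : Prop :=
  ∀ (t : ContTNorm) (T : TruthAlg t), Taut t T = L →
    ∀ α β : Formula,
      (Formula.iff α β ∈ L ↔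
        ∀ v : ℕ → ℝ, IsValuation t T v → (eval t v α = 1 ↔ eval t v β = 1))

/-- Principle P2. -/
def P2 (L : Set Formula) : Prop :=
  ∀ (t : ContTNorm) (T : TruthAlg t), Taut t T = L →
    ∀ v w : ℕ → ℝ, IsValuation t T v → IsValuation t T w → v ≠ w →
      ∃ α : Formula, 0 < eval t v α ∧ eval t w α = 0

/-- The Gödel t-norm: minimum. -/
def minT : ContTNorm where
  mul := fun x y => min x y
  maps_to := by
    rintro x ⟨hx0, hx1⟩ y ⟨hy0, hy1⟩
    exact ⟨le_min hx0 hy0, min_le_of_left_le hx1⟩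
  continuousOn := (continuous_fst.min continuous_snd).continuousOn
  assoc := fun x _ y _ z _ => min_assoc x y z
  comm := fun x _ y _ => min_comm x y
  mono := fun a _ b _ c _ h => min_le_min le_rfl h
  one_mul' := by rintro x ⟨hx0, hx1⟩; exact min_eq_right hx1

/-- The Łukasiewicz t-norm: `x ⊙ y = max 0 (x + y - 1)`. -/
def lukT : ContTNorm where
  mul := fun x y => max 0 (x + y - 1)
  maps_to := by
    rintro x ⟨hx0, hx1⟩ y ⟨hy0, hy1⟩
    exact ⟨le_max_left _ _, max_le zero_le_one (by linarith)⟩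
  continuousOn :=
    (continuous_const.max ((continuous_fst.add continuous_snd).sub continuous_const)).continuousOn
  assoc := by
    rintro x ⟨hx0, hx1⟩ y ⟨hy0, hy1⟩ z ⟨hz0, hz1⟩
    simp only [max_def]
    split_ifs <;> linarith
  comm := by intro x _ y _; rw [add_comm]
  mono := by
    rintro a _ b _ c _ h
    exact max_le_max le_rfl (by linarith)
  one_mul' := by
    rintro x ⟨hx0, hx1⟩
    rw [show (1:ℝ) + x - 1 = x by ring, max_eq_right hx0]

/-- The product t-norm: ordinary multiplication. -/
def prodT : ContTNorm where
  mul := fun x y => x * y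
  maps_to := by
    rintro x ⟨hx0, hx1⟩ y ⟨hy0, hy1⟩
    exact ⟨mul_nonneg hx0 hy0, by nlinarith⟩
  continuousOn := (continuous_fst.mul continuous_snd).continuousOn
  assoc := fun x _ y _ z _ => mul_assoc x y z
  comm := fun x _ y _ => mul_comm x y
  mono := by rintro a ⟨ha0, _⟩ b _ c _ h; exact mul_le_mul_of_nonneg_left h ha0
  one_mul' := fun x _ => one_mul x

lemma ContTNorm.mul_zero' (t : ContTNorm) {x : ℝ} (hx : x ∈ I01) : t.mul x 0 = 0 := by
  have h01 : (0:ℝ) ∈ I01 := ⟨le_rfl, zero_le_one⟩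
  have h11 : (1:ℝ) ∈ I01 := ⟨zero_le_one, le_rfl⟩
  have h1 : t.mul x 0 = t.mul 0 x := t.comm x hx 0 h01
  have h2 : t.mul 0 x ≤ t.mul 0 1 := t.mono 0 h01 x hx 1 h11 hx.2
  have h3 : t.mul 0 1 = t.mul 1 0 := t.comm 0 h01 1 h11
  have h4 : t.mul 1 0 = 0 := t.one_mul' 0 h01
  have h5 : t.mul x 0 ∈ I01 := t.maps_to x hx 0 h01
  rw [h3, h4] at h2
  rw [h1] at h5 ⊢
  exact le_antisymm h2 h5.1

lemma resid_mem_I01 (t : ContTNorm) {x y : ℝ} (hx : x ∈ I01) (hy : y ∈ I01) :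
    resid t x y ∈ I01 := by
  have h01 : (0:ℝ) ∈ I01 := ⟨le_rfl, zero_le_one⟩
  have h0 : (0:ℝ) ∈ {c | c ∈ I01 ∧ t.mul x c ≤ y} :=
    ⟨h01, by rw [t.mul_zero' hx]; exact hy.1⟩
  have hbdd : BddAbove {c | c ∈ I01 ∧ t.mul x c ≤ y} := ⟨1, fun c hc => hc.1.2⟩
  constructor
  · exact le_csSup hbdd h0
  · exact csSup_le ⟨0, h0⟩ fun c hc => hc.1.2

/-- The full algebra of truth values `[0,1]` for a t-norm `t`. -/
def fullAlg (t : ContTNorm) : TruthAlg t where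
  carrier := I01
  subset := le_rfl
  zero_mem := ⟨le_rfl, zero_le_one⟩
  one_mem := ⟨zero_le_one, le_rfl⟩
  mul_mem := t.maps_to
  resid_mem := fun _ hx _ hy => resid_mem_I01 t hx hy

lemma resid_eq_one_of_le (t : ContTNorm) {x y : ℝ} (hx : x ∈ I01) (hy : y ∈ I01)
    (hxy : x ≤ y) : resid t x y = 1 := by
  have h11 : (1:ℝ) ∈ I01 := ⟨zero_le_one, le_rfl⟩
  have hmul : t.mul x 1 = x := by rw [t.comm x hx 1 h11]; exact t.one_mul' x hx
  have h1 : (1:ℝ) ∈ {c | c ∈ I01 ∧ t.mul x c ≤ y} := ⟨h11, by rw [hmul]; exact hxy⟩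
  have hbdd : BddAbove {c | c ∈ I01 ∧ t.mul x c ≤ y} := ⟨1, fun c hc => hc.1.2⟩
  exact le_antisymm (csSup_le ⟨1, h1⟩ fun c hc => hc.1.2) (le_csSup hbdd h1)

lemma resid_one_zero (t : ContTNorm) : resid t 1 0 = 0 := by
  have : {c | c ∈ I01 ∧ t.mul 1 c ≤ 0} = {0} := by
    ext c
    constructor
    · rintro ⟨hc, hle⟩
      have := t.one_mul' c hc
      have := hc.1
      simp only [Set.mem_singleton_iff]
      linarith [this, (t.one_mul' c hc) ▸ hle]
    · rintro rfl
      exact ⟨⟨le_rfl, zero_le_one⟩, by rw [t.mul_zero' ⟨zero_le_one, le_rfl⟩]⟩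
  rw [resid, this, csSup_singleton]

/-- The two-element algebra of truth values `{0,1}`. -/
def boolAlg (t : ContTNorm) : TruthAlg t where
  carrier := {0, 1}
  subset := by
    rintro x (rfl | rfl)
    · exact ⟨le_rfl, zero_le_one⟩
    · exact ⟨zero_le_one, le_rfl⟩
  zero_mem := Or.inl rfl
  one_mem := Or.inr rfl
  mul_mem := by
    have h01 : (0:ℝ) ∈ I01 := ⟨le_rfl, zero_le_one⟩
    have h11 : (1:ℝ) ∈ I01 := ⟨zero_le_one, le_rfl⟩
    rintro x (rfl | rfl) y (rfl | rfl)
    · exact Or.inl (t.mul_zero' h01)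
    · exact Or.inl (by rw [t.comm 0 h01 1 h11]; exact t.mul_zero' h11)
    · exact Or.inl (t.mul_zero' h11)
    · exact Or.inr (t.one_mul' 1 h11)
  resid_mem := by
    have h01 : (0:ℝ) ∈ I01 := ⟨le_rfl, zero_le_one⟩
    have h11 : (1:ℝ) ∈ I01 := ⟨zero_le_one, le_rfl⟩
    rintro x (rfl | rfl) y (rfl | rfl)
    · exact Or.inr (resid_eq_one_of_le t h01 h01 le_rfl)
    · exact Or.inr (resid_eq_one_of_le t h01 h11 zero_le_one)
    · exact Or.inl (resid_one_zero t)
    · exact Or.inr (resid_eq_one_of_le t h11 h11 le_rfl)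

/-- Classical logic: the logic induced by the two-element algebra `{0,1}`
(this is independent of the chosen continuous t-norm). -/
def ClassicalLogic : Set Formula := Taut minT (boolAlg minT)


namespace ContTNorm

variable (t : ContTNorm) {x y : ℝ}

lemma mul_one' (hx : x ∈ I01) : t.mul x 1 = x := by
  rw [t.comm x hx 1 ⟨zero_le_one, le_rfl⟩, t.one_mul' x hx]

lemma mul_le_left (hx : x ∈ I01) (hy : y ∈ I01) : t.mul x y ≤ x := by
  simpa only [t.mul_one' hx] using t.mono x hx y hy 1 ⟨zero_le_one, le_rfl⟩ hy.2

lemma mul_le_right (hx : x ∈ I01) (hy : y ∈ I01) : t.mul x y ≤ y := by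
  rw [t.comm x hx y hy]
  exact t.mul_le_left hy hx

lemma mul_eq_one_iff (hx : x ∈ I01) (hy : y ∈ I01) : t.mul x y = 1 ↔ x = 1 ∧ y = 1 := by
  refine ⟨fun h => ⟨?_, ?_⟩, ?_⟩
  · exact le_antisymm hx.2 (h ▸ t.mul_le_left hx hy)
  · exact le_antisymm hy.2 (h ▸ t.mul_le_right hx hy)
  · rintro ⟨rfl, rfl⟩
    exact t.mul_one' ⟨zero_le_one, le_rfl⟩

lemma mul_eq_left_of_idem (hx : x ∈ I01) (hy : y ∈ I01) (hxx : t.mul x x = x) (hxy : x ≤ y) :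
    t.mul x y = x :=
  le_antisymm (t.mul_le_left hx hy) (hxx.symm.trans_le (t.mono x hx x hx y hy hxy))

lemma mul_eq_min_of_idem (hx : x ∈ I01) (hy : y ∈ I01) (hxx : t.mul x x = x)
    (hyy : t.mul y y = y) : t.mul x y = min x y := by
  rcases le_total x y with hxy | hyx
  · rw [min_eq_left hxy, t.mul_eq_left_of_idem hx hy hxx hxy]
  · rw [min_eq_right hyx, t.comm x hx y hy, t.mul_eq_left_of_idem hy hx hyy hyx]

end ContTNorm

section Residuum

variable (t : ContTNorm) {x y : ℝ}

lemma le_resid_of_mul_le {c : ℝ} (hc : c ∈ I01) (h : t.mul x c ≤ y) : c ≤ resid t x y :=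
  le_csSup ⟨1, fun _ hd => hd.1.2⟩ ⟨hc, h⟩

/-- The supremum defining the residuum is attained, by continuity of `t`. -/
lemma mul_resid_le (hx : x ∈ I01) (hy : y ∈ I01) : t.mul x (resid t x y) ≤ y := by
  have hcont : ContinuousOn (t.mul x) I01 :=
    t.continuousOn.comp (continuous_const.prodMk continuous_id).continuousOn
      fun _ hc => ⟨hx, hc⟩
  have hcpt : IsCompact (I01 ∩ t.mul x ⁻¹' Iic y) :=
    isCompact_Icc.of_isClosed_subset
      (hcont.preimage_isClosed_of_isClosed isClosed_Icc isClosed_Iic) inter_subset_left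
  have h0 : (0 : ℝ) ∈ I01 ∩ t.mul x ⁻¹' Iic y :=
    ⟨⟨le_rfl, zero_le_one⟩, by simp only [mem_preimage, t.mul_zero' hx, mem_Iic, hy.1]⟩
  exact (hcpt.sSup_mem ⟨0, h0⟩).2

lemma resid_eq_one_iff (hx : x ∈ I01) (hy : y ∈ I01) : resid t x y = 1 ↔ x ≤ y := by
  refine ⟨fun h => ?_, resid_eq_one_of_le t hx hy⟩
  simpa only [h, t.mul_one' hx] using mul_resid_le t hx hy

lemma resid_eq_of_lt_of_idem (hx : x ∈ I01) (hy : y ∈ I01) (hxx : t.mul x x = x)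
    (hrr : t.mul (resid t x y) (resid t x y) = resid t x y) (hyx : y < x) :
    resid t x y = y := by
  have hr := resid_mem_I01 t hx hy
  refine le_antisymm ?_ (le_resid_of_mul_le t hy (t.mul_le_right hx hy))
  have hmul := mul_resid_le t hx hy
  rcases le_total x (resid t x y) with hxr | hrx
  · rw [t.mul_eq_left_of_idem hx hr hxx hxr] at hmul
    exact absurd hmul (not_le.2 hyx)
  · rwa [t.comm x hx _ hr, t.mul_eq_left_of_idem hr hx hrr hrx] at hmul

lemma mul_resid_resid_eq_one_iff (hx : x ∈ I01) (hy : y ∈ I01) :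
    t.mul (resid t x y) (resid t y x) = 1 ↔ x = y := by
  rw [t.mul_eq_one_iff (resid_mem_I01 t hx hy) (resid_mem_I01 t hy hx),
    resid_eq_one_iff t hx hy, resid_eq_one_iff t hy hx, le_antisymm_iff]

end Residuum

section Semantics

variable {t : ContTNorm} (T : TruthAlg t) {v : ℕ → ℝ}

lemma eval_mem (hv : IsValuation t T v) (φ : Formula) : eval t v φ ∈ T.carrier := by
  induction φ with
  | var i => exact hv i
  | bot => exact T.zero_mem
  | conj a b iha ihb => exact T.mul_mem _ iha _ ihb
  | impl a b iha ihb => exact T.resid_mem _ iha _ ihb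

lemma eval_iff_eq_one_iff (hv : IsValuation t T v) (φ ψ : Formula) :
    eval t v (φ.iff ψ) = 1 ↔ eval t v φ = eval t v ψ :=
  mul_resid_resid_eq_one_iff t (T.subset (eval_mem T hv φ)) (T.subset (eval_mem T hv ψ))

lemma eval_eq_eval_minT (hid : ∀ a ∈ T.carrier, t.mul a a = a) (hv : IsValuation t T v)
    (φ : Formula) : eval t v φ = eval minT v φ := by
  induction φ with
  | var i => rfl
  | bot => rfl
  | conj a b iha ihb =>
    have hmul := t.mul_eq_min_of_idem (T.subset (eval_mem T hv a)) (T.subset (eval_mem T hv b))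
      (hid _ (eval_mem T hv a)) (hid _ (eval_mem T hv b))
    exact hmul.trans (by rw [iha, ihb]; rfl)
  | impl a b iha ihb =>
    change resid t (eval t v a) (eval t v b) = resid minT (eval minT v a) (eval minT v b)
    have ha := eval_mem T hv a
    have hb := eval_mem T hv b
    rw [← iha, ← ihb]
    rcases le_or_gt (eval t v a) (eval t v b) with hab | hba
    · rw [resid_eq_one_of_le t (T.subset ha) (T.subset hb) hab,
        resid_eq_one_of_le minT (T.subset ha) (T.subset hb) hab]
    · rw [resid_eq_of_lt_of_idem t (T.subset ha) (T.subset hb) (hid _ ha)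
          (hid _ (T.resid_mem _ ha _ hb)) hba,
        resid_eq_of_lt_of_idem minT (T.subset ha) (T.subset hb) (min_self _) (min_self _) hba]

end Semantics

/-- The logic of `(T, t)` extends Gödel logic iff every element of `T` is idempotent;
in that case `t` restricted to `T` is the minimum and its residuum is the Gödel residuum. -/
theorem extends_Godel_iff_idempotent (t : ContTNorm) (T : TruthAlg t) :
    (Taut minT (fullAlg minT) ⊆ Taut t T ↔ ∀ a ∈ T.carrier, t.mul a a = a) ∧
    ((∀ a ∈ T.carrier, t.mul a a = a) →
      (∀ a ∈ T.carrier, ∀ b ∈ T.carrier, t.mul a b = min a b) ∧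
      (∀ a ∈ T.carrier, ∀ b ∈ T.carrier,
        (a ≤ b → resid t a b = 1) ∧ (b < a → resid t a b = b))) := by
  have hconst (a : ℝ) (ha : a ∈ T.carrier) : IsValuation t T fun _ => a := fun _ => ha
  refine ⟨⟨fun hsub a ha => ?_, fun hid φ hφ v hv => ?_⟩, fun hid => ⟨?_, ?_⟩⟩
  · -- `X₀ & X₀ ↔ X₀` is a Gödel tautology; in `T` at the constant `a` it says `a * a = a`.
    have hgodel : Formula.iff (.conj (.var 0) (.var 0)) (.var 0) ∈ Taut minT (fullAlg minT) :=
      fun w hw => (eval_iff_eq_one_iff (fullAlg minT) hw _ _).2 (min_self (w 0))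
    exact (eval_iff_eq_one_iff T (hconst a ha) _ _).1 (hsub hgodel _ (hconst a ha))
  · rw [eval_eq_eval_minT T hid hv]
    exact hφ v fun i => T.subset (hv i)
  · exact fun a ha b hb => t.mul_eq_min_of_idem (T.subset ha) (T.subset hb) (hid a ha) (hid b hb)
  · exact fun a ha b hb => ⟨resid_eq_one_of_le t (T.subset ha) (T.subset hb),
      resid_eq_of_lt_of_idem t (T.subset ha) (T.subset hb) (hid a ha)
        (hid _ (T.resid_mem a ha b hb))⟩

end
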